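/- Let (X,S) be an X3C instance. Construct the following allocation instance on a path: for each k ∈ {1,…,s}, a path P_{S_k} = (v_{S_k,1}, v_{S_k,2}, v_{S_k,3}) and a path B_k of 2r+2s vertices b_k^1,…,b_k^{2r+2s}; the graph G is the single path obtained by concatenating, in order, P_{S_1}, B_1, P_{S_2}, B_2, …, P_{S_s}, B_s. The agents all have binary additive valuations: for each x ∈ X, agent i_x approves exactly the items v_{S,j} with S^j = x; for each k ∈ {1,…,s−r}, agent d_k approves exactly all items v_{S,j} (S ∈ S, j ∈ {1,2,3}); and for each k ∈ {1,…,s}, agent z_k approves exactly the 2r+2s vertices of B_k (so there are 2r+2s agents in total). Then mms_{z_k} = 1 for every k ∈ {1,…,s}, and in every MMS connected allocation π: (i) for each k ∈ {1,…,s}, the bundle π(z_k) contains at least one vertex of B_k, and (ii) each agent in {i_x : x ∈ X} ∪ {d_1,…,d_{s−r}} receives a bundle that intersects at most one of the paths P_{S_1},…,P_{S_s}. -/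

import Mathlib

/-!
Agent `z_k` approves the `2r + 2s` consecutive vertices of `B_k`, as many as there are agents.
Cutting the path so that every bundle gets exactly one of them gives `mms_{z_k} ≥ 1`, and by
pigeonhole some bundle of any partition gets at most one, so `mms_{z_k} = 1`. Hence in an MMS
allocation every `z_k` owns a vertex of `B_k`. Bundles on a path are intervals, so a bundle meeting
`P_{S_k}` and `P_{S_k'}` with `k < k'` would contain that vertex, which lies between them.
-/
open Finset

/-- A finite set of items is *connected* in the item graph `G` if the induced
subgraph is preconnected (the empty set counts as connected). -/
def ConnSet {V : Type*} (G : SimpleGraph V) (X : Finset V) : Prop :=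
  (G.induce (X : Set V)).Preconnected

/-- `π` is a connected allocation of the items in `R` among the agents in `N`. -/
def IsConnAllocOn {V N : Type*} [DecidableEq V] (G : SimpleGraph V)
    (R : Finset V) (π : N → Finset V) : Prop :=
  (∀ i, π i ⊆ R) ∧ (∀ i, ConnSet G (π i)) ∧
    (∀ i j, i ≠ j → Disjoint (π i) (π j)) ∧ (∀ v ∈ R, ∃ i, v ∈ π i)

/-- `π` is a connected allocation of all items among the agents in `N`. -/
def IsConnAlloc {V N : Type*} [Fintype V] [DecidableEq V] (G : SimpleGraph V)
    (π : N → Finset V) : Prop :=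
  IsConnAllocOn G Finset.univ π

/-- `π'` is a Pareto-improvement of `π`. -/
def ParetoImproves {V N : Type*} (u : N → Finset V → ℝ)
    (π' π : N → Finset V) : Prop :=
  (∀ i, u i (π i) ≤ u i (π' i)) ∧ ∃ i, u i (π i) < u i (π' i)

/-- `π` is Pareto-optimal: no connected allocation Pareto-improves it. -/
def ParetoOptimal {V N : Type*} [Fintype V] [DecidableEq V] (G : SimpleGraph V)
    (u : N → Finset V → ℝ) (π : N → Finset V) : Prop :=
  ∀ π', IsConnAlloc G π' → ¬ ParetoImproves u π' π

/-- `π` satisfies EF1: any envy can be removed by deleting a single item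
(keeping the envied bundle connected). -/
def EF1 {V N : Type*} [Fintype V] [DecidableEq V] (G : SimpleGraph V)
    (u : N → Finset V → ℝ) (π : N → Finset V) : Prop :=
  ∀ i j, u i (π j) ≤ u i (π i) ∨
    ∃ v ∈ π j, ConnSet G ((π j).erase v) ∧ u i ((π j).erase v) ≤ u i (π i)

/-- The maximin fair share of an agent with valuation `u`, when the items are
divided into `|N|` connected bundles. -/
noncomputable def mmsVal {V : Type*} (N : Type*) [Fintype V] [DecidableEq V]
    (G : SimpleGraph V) (u : Finset V → ℝ) : ℝ :=
  sSup {x : ℝ | ∃ P : N → Finset V, IsConnAlloc G P ∧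
    x = sInf (Set.range fun j => u (P j))}

/-- `π` is an MMS allocation: every agent gets at least her maximin fair share. -/
def IsMMS {V N : Type*} [Fintype V] [DecidableEq V] (G : SimpleGraph V)
    (u : N → Finset V → ℝ) (π : N → Finset V) : Prop :=
  ∀ i, mmsVal N G (u i) ≤ u i (π i)

open SimpleGraph

theorem SimpleGraph.Walk.mem_support_of_mem_uIcc_pathGraph {n : ℕ} {a b c : Fin n}
    (w : (pathGraph n).Walk a b) (hc : c ∈ Set.uIcc a b) : c ∈ w.support := by
  induction w with
  | nil => simp_all
  | @cons a x b hax p ih =>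
    rw [pathGraph_adj] at hax
    rw [Set.mem_uIcc] at hc ih
    by_cases hcx : x ≤ c ∧ c ≤ b ∨ b ≤ c ∧ c ≤ x
    · exact List.mem_cons_of_mem _ (ih hcx)
    · obtain rfl | rfl : c = a ∨ c = x := by omega
      · exact List.mem_cons_self
      · exact List.mem_cons_of_mem _ p.start_mem_support

theorem connSet_pathGraph_iff {n : ℕ} {X : Finset (Fin n)} :
    ConnSet (pathGraph n) X ↔ (X : Set (Fin n)).OrdConnected := by
  constructor
  · refine fun hX => ⟨fun a ha b hb c hc => ?_⟩
    obtain ⟨w⟩ := hX ⟨a, ha⟩ ⟨b, hb⟩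
    have := (w.map (Embedding.induce (X : Set (Fin n))).toHom)
      |>.mem_support_of_mem_uIcc_pathGraph (Set.Icc_subset_uIcc hc)
    rw [Walk.support_map, List.mem_map] at this
    obtain ⟨y, -, rfl⟩ := this
    exact y.2
  · intro hX
    suffices h : ∀ a b : X, a.1 ≤ b.1 →
        ((pathGraph n).induce (X : Set (Fin n))).Reachable a b by
      intro a b
      rcases le_total a.1 b.1 with hab | hba
      exacts [h a b hab, (h b a hba).symm]
    rintro a ⟨⟨m, hm⟩, hmX⟩ (hab : a.1.1 ≤ m)
    induction m, hab using Nat.le_induction with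
    | base => rfl
    | succ m ham ih =>
      have hmX' : (⟨m, by omega⟩ : Fin n) ∈ (X : Set (Fin n)) :=
        hX.out a.2 hmX ⟨ham, Nat.le_succ m⟩
      refine (ih (by omega) hmX').trans (Adj.reachable ?_)
      simp [pathGraph_adj]

theorem IsConnAlloc.eq_of_mem_of_le_of_le {N : Type*} {n : ℕ} {π : N → Finset (Fin n)}
    (hπ : IsConnAlloc (pathGraph n) π) {i j : N} {a b c : Fin n} (ha : a ∈ π i)
    (hb : b ∈ π i) (hc : c ∈ π j) (hac : a ≤ c) (hcb : c ≤ b) : i = j := by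
  by_contra hij
  have hci : c ∈ π i := (connSet_pathGraph_iff.mp (hπ.2.1 i)).out ha hb ⟨hac, hcb⟩
  exact disjoint_left.mp (hπ.2.2.1 i j hij) hci hc

theorem exists_card_inter_le_of_card_lt {ι V : Type*} [Fintype ι] [DecidableEq V]
    {P : ι → Finset V} (hP : ∀ i j, i ≠ j → Disjoint (P i) (P j)) {A : Finset V} {k : ℕ}
    (hA : A.card < (k + 1) * Fintype.card ι) : ∃ i, (P i ∩ A).card ≤ k := by
  have hsum : ∑ i, (P i ∩ A).card < ∑ _i : ι, (k + 1) := calc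
    ∑ i, (P i ∩ A).card = (univ.biUnion fun i => P i ∩ A).card :=
      (card_biUnion fun i _ j _ hij =>
        (hP i j hij).mono inter_subset_left inter_subset_left).symm
    _ ≤ A.card := card_le_card (biUnion_subset.mpr fun _ _ => inter_subset_right)
    _ < ∑ _i : ι, (k + 1) := by simpa [mul_comm] using hA
  obtain ⟨i, -, hi⟩ := exists_lt_of_sum_lt hsum
  exact ⟨i, Nat.lt_succ_iff.mp hi⟩

theorem mmsVal_eq_of_forall_exists_le {V N : Type*} [Fintype V] [DecidableEq V] [Finite N]
    {G : SimpleGraph V} {u : Finset V → ℝ} {c : ℝ} {P : N → Finset V}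
    (hP : IsConnAlloc G P) (hPc : ∀ j, c ≤ u (P j))
    (hle : ∀ Q : N → Finset V, IsConnAlloc G Q → ∃ j, u (Q j) ≤ c) :
    mmsVal N G u = c := by
  have : Nonempty N := ⟨(hle P hP).choose⟩
  have hbdd : ∀ x ∈ {x : ℝ | ∃ Q : N → Finset V, IsConnAlloc G Q ∧
      x = sInf (Set.range fun j => u (Q j))}, x ≤ c := by
    rintro x ⟨Q, hQ, rfl⟩
    obtain ⟨j, hj⟩ := hle Q hQ
    exact (csInf_le (Set.finite_range _).bddBelow ⟨j, rfl⟩).trans hj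
  refine le_antisymm (csSup_le ⟨_, P, hP, rfl⟩ hbdd) ?_
  exact (le_csInf (Set.range_nonempty _) (by simpa using hPc)).trans
    (le_csSup ⟨c, hbdd⟩ ⟨P, hP, rfl⟩)

theorem exists_isConnAlloc_pathGraph_mem_block {N : Type*} {n a m : ℕ} (e : N ≃ Fin m)
    (hm : 0 < m) (h : a + m ≤ n) :
    ∃ P : N → Finset (Fin n), IsConnAlloc (pathGraph n) P ∧
      ∀ i, ∃ v ∈ P i, (v : ℕ) = a + e i := by
  classical
  -- piece `t` is `{a + t}`, except that the first and last pieces extend to the ends of the path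
  let piece (t : ℕ) : Finset (Fin n) :=
    univ.filter fun v => (t = 0 ∨ a + t ≤ v) ∧ (t + 1 = m ∨ (v : ℕ) ≤ a + t)
  have mem_piece {t : ℕ} {v : Fin n} :
      v ∈ piece t ↔ (t = 0 ∨ a + t ≤ v) ∧ (t + 1 = m ∨ (v : ℕ) ≤ a + t) := by
    simp [piece]
  refine ⟨fun i => piece (e i), ⟨fun _ => subset_univ _, fun i => ?_, fun i j hij => ?_,
    fun v _ => ?_⟩,
    fun i => ⟨⟨a + e i, by omega⟩, mem_piece.mpr (by dsimp only; omega), rfl⟩⟩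
  · refine connSet_pathGraph_iff.mpr ⟨fun x hx y hy z hz => ?_⟩
    simp only [mem_coe, mem_piece, Set.mem_Icc] at hx hy hz ⊢
    omega
  · have hne : (e i : ℕ) ≠ e j := fun h => hij (e.injective (Fin.ext h))
    refine disjoint_left.mpr fun v hvi hvj => ?_
    rw [mem_piece] at hvi hvj
    omega
  · let t : ℕ := min (v - a) (m - 1)
    refine ⟨e.symm ⟨t, by omega⟩, mem_piece.mpr ?_⟩
    simp only [Equiv.apply_symm_apply]
    omega

theorem mmsVal_pathGraph_eq_one_of_approves_block {N : Type*} [Fintype N] [Nonempty N]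
    {n a m : ℕ} (hN : Fintype.card N = m) (h : a + m ≤ n) {A : Finset (Fin n)}
    (hA : ∀ v : Fin n, v ∈ A ↔ a ≤ v ∧ (v : ℕ) < a + m) {u : Finset (Fin n) → ℝ}
    (hu : ∀ X, u X = ((X ∩ A).card : ℝ)) :
    mmsVal N (pathGraph n) u = 1 := by
  have hm : 0 < m := hN ▸ Fintype.card_pos
  obtain ⟨P, hP, hPA⟩ :=
    exists_isConnAlloc_pathGraph_mem_block (Fintype.equivFinOfCardEq hN) hm h
  refine mmsVal_eq_of_forall_exists_le hP (fun i => ?_) (fun Q hQ => ?_)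
  · obtain ⟨v, hv, hva⟩ := hPA i
    have hpos : 0 < (P i ∩ A).card :=
      card_pos.mpr ⟨v, mem_inter.mpr ⟨hv, (hA v).mpr (by omega)⟩⟩
    rw [hu]
    exact_mod_cast hpos
  · have hAcard : A.card ≤ m := calc
      A.card ≤ (Ico a (a + m)).card :=
        card_le_card_of_injOn Fin.val (fun v hv => by simpa using (hA v).mp hv)
          Fin.val_injective.injOn
      _ = m := by simp
    obtain ⟨j, hj⟩ := exists_card_inter_le_of_card_lt hQ.2.2.1 (A := A) (k := 1) (by omega)
    exact ⟨j, by rw [hu]; exact_mod_cast hj⟩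

theorem exists_eq_iff_of_val_eq_add {n m a : ℕ} {f : Fin m → Fin n}
    (hf : ∀ t, (f t : ℕ) = a + t) {v : Fin n} :
    (∃ t, v = f t) ↔ a ≤ v ∧ (v : ℕ) < a + m := by
  constructor
  · rintro ⟨t, rfl⟩
    rw [hf]
    omega
  · exact fun hv => ⟨⟨v - a, by omega⟩, Fin.ext (by rw [hf]; dsimp only; omega)⟩

theorem IsConnAlloc.eq_of_meets_segments {N : Type*} {n s w m L : ℕ} (hL : w + m ≤ L)
    {seg : Fin s → Fin w → Fin n} (hseg : ∀ k j, (seg k j : ℕ) = L * k + j)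
    {blk : Fin s → Fin m → Fin n} (hblk : ∀ k t, (blk k t : ℕ) = L * k + w + t)
    {π : N → Finset (Fin n)} (hπ : IsConnAlloc (pathGraph n) π) {z : Fin s → N}
    (hz : ∀ k, ∃ t, blk k t ∈ π (z k)) {i : N} (hi : ∀ k, i ≠ z k) {k k' : Fin s}
    (hk : ∃ j, seg k j ∈ π i) (hk' : ∃ j, seg k' j ∈ π i) : k = k' := by
  have not_lt_of_mem : ∀ {k k' : Fin s} {j j' : Fin w},
      seg k j ∈ π i → seg k' j' ∈ π i → ¬ k < k' := by
    intro k k' j j' hj hj' hkk'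
    obtain ⟨t, ht⟩ := hz k
    have hLk : L * k + L ≤ L * k' :=
      (mul_add_one _ _).symm.trans_le (Nat.mul_le_mul_left _ hkk')
    refine hi k (hπ.eq_of_mem_of_le_of_le hj hj' ht ?_ ?_) <;>
      simp only [Fin.le_iff_val_le_val, hseg, hblk] <;> omega
  obtain ⟨j, hj⟩ := hk
  obtain ⟨j', hj'⟩ := hk'
  exact le_antisymm (le_of_not_gt (not_lt_of_mem hj' hj)) (le_of_not_gt (not_lt_of_mem hj hj'))

/-- Encoding: agent `Sum.inl x` is `i_x`, `Sum.inr (Sum.inl k)` is `d_k` and `Sum.inr (Sum.inr k)`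
is `z_k`; vertex `vS k j` is `v_{S_k,j}` and `bpos k t` is `b_k^t`, all indices counted from `0`. -/
theorem stmt15_general (r s : ℕ) (hrs : r ≤ s)
    (vS : Fin s → Fin 3 → Fin (s * (2 * r + 2 * s + 3)))
    (hvS : ∀ k j, (vS k j : ℕ) = (2 * r + 2 * s + 3) * (k : ℕ) + (j : ℕ))
    (bpos : Fin s → Fin (2 * r + 2 * s) → Fin (s * (2 * r + 2 * s + 3)))
    (hbpos : ∀ k t, (bpos k t : ℕ) =
      (2 * r + 2 * s + 3) * (k : ℕ) + 3 + (t : ℕ))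
    (A : (Fin (3 * r) ⊕ Fin (s - r) ⊕ Fin s) →
      Finset (Fin (s * (2 * r + 2 * s + 3))))
    (hAz : ∀ k, A (Sum.inr (Sum.inr k)) =
      Finset.univ.filter (fun v => ∃ t, v = bpos k t))
    (u : (Fin (3 * r) ⊕ Fin (s - r) ⊕ Fin s) →
      Finset (Fin (s * (2 * r + 2 * s + 3))) → ℝ)
    (hu : ∀ i X, u i X = ((X ∩ A i).card : ℝ)) :
    (∀ k : Fin s,
      mmsVal (Fin (3 * r) ⊕ Fin (s - r) ⊕ Fin s)
        (SimpleGraph.pathGraph (s * (2 * r + 2 * s + 3)))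
        (u (Sum.inr (Sum.inr k))) = 1) ∧
    (∀ π : (Fin (3 * r) ⊕ Fin (s - r) ⊕ Fin s) →
        Finset (Fin (s * (2 * r + 2 * s + 3))),
      IsConnAlloc (SimpleGraph.pathGraph (s * (2 * r + 2 * s + 3))) π →
      IsMMS (SimpleGraph.pathGraph (s * (2 * r + 2 * s + 3))) u π →
      (∀ k : Fin s, ∃ t, bpos k t ∈ π (Sum.inr (Sum.inr k))) ∧
      (∀ x : Fin (3 * r), ∀ k k' : Fin s,
        (∃ j, vS k j ∈ π (Sum.inl x)) → (∃ j, vS k' j ∈ π (Sum.inl x)) →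
        k = k') ∧
      (∀ d : Fin (s - r), ∀ k k' : Fin s,
        (∃ j, vS k j ∈ π (Sum.inr (Sum.inl d))) →
        (∃ j, vS k' j ∈ π (Sum.inr (Sum.inl d))) → k = k')) := by
  have hcard : Fintype.card (Fin (3 * r) ⊕ Fin (s - r) ⊕ Fin s) = 2 * r + 2 * s := by
    simp only [Fintype.card_sum, Fintype.card_fin]
    omega
  have hmms : ∀ k : Fin s, mmsVal (Fin (3 * r) ⊕ Fin (s - r) ⊕ Fin s)
      (SimpleGraph.pathGraph (s * (2 * r + 2 * s + 3))) (u (Sum.inr (Sum.inr k))) = 1 := by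
    intro k
    have : Nonempty (Fin (3 * r) ⊕ Fin (s - r) ⊕ Fin s) := ⟨Sum.inr (Sum.inr k)⟩
    refine mmsVal_pathGraph_eq_one_of_approves_block hcard
      (a := (2 * r + 2 * s + 3) * k + 3) (by nlinarith [k.isLt])
      (fun v => ?_) (hu _)
    simp [hAz, exists_eq_iff_of_val_eq_add (hbpos k)]
  refine ⟨hmms, fun π hπ hM => ?_⟩
  have hz : ∀ k : Fin s, ∃ t, bpos k t ∈ π (Sum.inr (Sum.inr k)) := by
    intro k
    have hpos : 0 < (π (Sum.inr (Sum.inr k)) ∩ A (Sum.inr (Sum.inr k))).card := by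
      have := hM (Sum.inr (Sum.inr k))
      rw [hmms, hu] at this
      exact_mod_cast this
    obtain ⟨v, hv⟩ := card_pos.mp hpos
    rw [mem_inter, hAz, mem_filter] at hv
    obtain ⟨hvπ, -, t, rfl⟩ := hv
    exact ⟨t, hvπ⟩
  exact ⟨hz, fun x _ _ => hπ.eq_of_meets_segments (by omega) hvS hbpos hz (by simp),
    fun d _ _ => hπ.eq_of_meets_segments (by omega) hvS hbpos hz (by simp)⟩

/-- the X3C path instance for PO & MMS. The path has
`s * (2r + 2s + 3)` vertices (encoded as `Fin (s * (2*r + 2*s + 3))`),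
obtained by concatenating, for `k = 1,…,s`, the 3-path `P_{S_k}` (positions
`vS k j`) followed by the `(2r+2s)`-path `B_k` (positions `bpos k t`).
Agents are `Sum.inl x` (agent `i_x`), `Sum.inr (Sum.inl k)` (dummy `d_k`) and
`Sum.inr (Sum.inr k)` (agent `z_k`), with binary additive valuations given by
the approval sets `A`. Then `mms_{z_k} = 1` for all `k`, and in every MMS
connected allocation each `z_k` gets a vertex of `B_k` and each agent
`i_x`/`d_k` gets a bundle meeting at most one of the paths `P_{S_1},…,P_{S_s}`. -/
theorem stmt15 (r s : ℕ) (hrs : r ≤ s)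
    (S : Fin s → Fin 3 → Fin (3 * r)) (hS : ∀ k, Function.Injective (S k))
    (vS : Fin s → Fin 3 → Fin (s * (2 * r + 2 * s + 3)))
    (hvS : ∀ k j, (vS k j : ℕ) = (2 * r + 2 * s + 3) * (k : ℕ) + (j : ℕ))
    (bpos : Fin s → Fin (2 * r + 2 * s) → Fin (s * (2 * r + 2 * s + 3)))
    (hbpos : ∀ k t, (bpos k t : ℕ) =
      (2 * r + 2 * s + 3) * (k : ℕ) + 3 + (t : ℕ))
    (A : (Fin (3 * r) ⊕ Fin (s - r) ⊕ Fin s) →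
      Finset (Fin (s * (2 * r + 2 * s + 3))))
    (hAx : ∀ x, A (Sum.inl x) =
      Finset.univ.filter (fun v => ∃ k j, v = vS k j ∧ S k j = x))
    (hAd : ∀ k, A (Sum.inr (Sum.inl k)) =
      Finset.univ.filter (fun v => ∃ k' j, v = vS k' j))
    (hAz : ∀ k, A (Sum.inr (Sum.inr k)) =
      Finset.univ.filter (fun v => ∃ t, v = bpos k t))
    (u : (Fin (3 * r) ⊕ Fin (s - r) ⊕ Fin s) →
      Finset (Fin (s * (2 * r + 2 * s + 3))) → ℝ)
    (hu : ∀ i X, u i X = ((X ∩ A i).card : ℝ)) :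
    (∀ k : Fin s,
      mmsVal (Fin (3 * r) ⊕ Fin (s - r) ⊕ Fin s)
        (SimpleGraph.pathGraph (s * (2 * r + 2 * s + 3)))
        (u (Sum.inr (Sum.inr k))) = 1) ∧
    (∀ π : (Fin (3 * r) ⊕ Fin (s - r) ⊕ Fin s) →
        Finset (Fin (s * (2 * r + 2 * s + 3))),
      IsConnAlloc (SimpleGraph.pathGraph (s * (2 * r + 2 * s + 3))) π →
      IsMMS (SimpleGraph.pathGraph (s * (2 * r + 2 * s + 3))) u π →
      (∀ k : Fin s, ∃ t, bpos k t ∈ π (Sum.inr (Sum.inr k))) ∧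
      (∀ x : Fin (3 * r), ∀ k k' : Fin s,
        (∃ j, vS k j ∈ π (Sum.inl x)) → (∃ j, vS k' j ∈ π (Sum.inl x)) →
        k = k') ∧
      (∀ d : Fin (s - r), ∀ k k' : Fin s,
        (∃ j, vS k j ∈ π (Sum.inr (Sum.inl d))) →
        (∃ j, vS k' j ∈ π (Sum.inr (Sum.inl d))) → k = k')) :=
  stmt15_general r s hrs vS hvS bpos hbpos A hAz u hu
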